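/- arXiv:1701.04183 — 5 statements merged into one kernel-verified Lean document; each statement's English description precedes it below -/
import Mathlib

section
/- Let C be an additive code of length n over GF(4) with coordinates indexed 0, …, n−1, and let A, B ⊆ {1, …, n−1}. Suppose there exist x, y ∈ C^⊥ (the trace dual) such that supp(x) ⊆ {0} ∪ A, supp(y) ⊆ {0} ∪ B, and x₀, y₀ are distinct nonzero elements of GF(4). Then any two codewords t, t' ∈ C satisfying tᵢ = t'ᵢ for all i ∈ A ∪ B must satisfy t₀ = t'₀; that is, the two sets of shares {tᵢ : i ∈ A} and {tᵢ : i ∈ B} determine the secret t₀. -/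
/-!
The difference `d = t - t'` is a codeword vanishing on `A ∪ B`, so its trace inner products with
`x` and `y` collapse to the single terms `Tr(x₀ d̄₀)` and `Tr(y₀ d̄₀)`, both zero. The trace
`a ↦ a + a²` vanishes exactly on `GF(2) = {0, 1}`; hence if `d₀ ≠ 0` both `x₀ d̄₀` and `y₀ d̄₀`
would equal `1`, forcing `x₀ = y₀`.
-/

/-- `GF(4)`, the field with 4 elements. -/
abbrev F4 := GaloisField 2 2

/-- The trace map `Tr : GF(4) → GF(2)`, `Tr(x) = x + x²` (valued in the prime subfield). -/
noncomputable def tr (x : F4) : F4 := x + x ^ 2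

/-- The conjugate `ȳ = y²` of an element of `GF(4)`. -/
noncomputable def conj (x : F4) : F4 := x ^ 2

/-- The trace dual of a code: all vectors whose trace inner product with every
codeword is zero. -/
def traceDual {n : ℕ} (C : Set (Fin n → F4)) : Set (Fin n → F4) :=
  {x | ∀ c ∈ C, ∑ i, tr (x i * conj (c i)) = 0}

lemma tr_eq_zero_iff {a : F4} : tr a = 0 ↔ a = 0 ∨ a = 1 := by
  have hfactor : tr a = a * (a - 1) := by
    rw [tr, sub_eq_add_neg, CharTwo.neg_eq]
    ring
  rw [hfactor, mul_eq_zero, sub_eq_zero]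

lemma eq_zero_of_tr_mul_conj_eq_zero {a b c : F4} (ha : a ≠ 0) (hb : b ≠ 0) (hab : a ≠ b)
    (hac : tr (a * conj c) = 0) (hbc : tr (b * conj c) = 0) : c = 0 := by
  by_contra hc
  have hc' : conj c ≠ 0 := pow_ne_zero 2 hc
  have ha1 : a * conj c = 1 := (tr_eq_zero_iff.mp hac).resolve_left (mul_ne_zero ha hc')
  have hb1 : b * conj c = 1 := (tr_eq_zero_iff.mp hbc).resolve_left (mul_ne_zero hb hc')
  exact hab (mul_right_cancel₀ hc' (ha1.trans hb1.symm))

lemma tr_mul_conj_eq_zero_of_mem_traceDual {n : ℕ} {C : Set (Fin n → F4)} {z d : Fin n → F4}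
    {j : Fin n} {S : Set (Fin n)} (hz : z ∈ traceDual C) (hd : d ∈ C)
    (hsupp : {i | z i ≠ 0} ⊆ insert j S) (hdS : ∀ i ∈ S, d i = 0) :
    tr (z j * conj (d j)) = 0 := by
  rw [← hz d hd, Finset.sum_eq_single_of_mem j (Finset.mem_univ j)]
  intro i _ hij
  by_cases hzi : z i = 0
  · simp [hzi, tr]
  · have hdi : d i = 0 := hdS i ((hsupp hzi).resolve_left hij)
    simp [hdi, tr, conj]

theorem two_dual_words_determine_secret_general (n : ℕ) (C : AddSubgroup (Fin (n + 1) → F4))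
    (A B : Set (Fin (n + 1)))
    (x y : Fin (n + 1) → F4)
    (hx : x ∈ traceDual (C : Set (Fin (n + 1) → F4)))
    (hy : y ∈ traceDual (C : Set (Fin (n + 1) → F4)))
    (hxsupp : {i | x i ≠ 0} ⊆ insert 0 A) (hysupp : {i | y i ≠ 0} ⊆ insert 0 B)
    (hx0 : x 0 ≠ 0) (hy0 : y 0 ≠ 0) (hxy0 : x 0 ≠ y 0)
    (t t' : Fin (n + 1) → F4) (ht : t ∈ C) (ht' : t' ∈ C)
    (hagree : ∀ i ∈ A ∪ B, t i = t' i) :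
    t 0 = t' 0 := by
  have hd : t - t' ∈ C := sub_mem ht ht'
  have hvanish : ∀ i ∈ A ∪ B, (t - t') i = 0 := fun i hi =>
    sub_eq_zero.mpr (hagree i hi)
  have hxd := tr_mul_conj_eq_zero_of_mem_traceDual hx hd hxsupp
    fun i hi => hvanish i (Or.inl hi)
  have hyd := tr_mul_conj_eq_zero_of_mem_traceDual hy hd hysupp
    fun i hi => hvanish i (Or.inr hi)
  exact sub_eq_zero.mp (eq_zero_of_tr_mul_conj_eq_zero hx0 hy0 hxy0 hxd hyd)

/-- If the trace dual of an additive code `C` over `GF(4)` contains two codewords `x, y`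
supported in `{0} ∪ A` and `{0} ∪ B` respectively, whose coordinates at `0` are distinct
nonzero elements of `GF(4)`, then the shares in `A` and `B` determine the secret: any two
codewords of `C` agreeing on `A ∪ B` have the same coordinate at `0`. -/
theorem two_dual_words_determine_secret (n : ℕ) (C : AddSubgroup (Fin (n + 1) → F4))
    (A B : Set (Fin (n + 1))) (hA : 0 ∉ A) (hB : 0 ∉ B)
    (x y : Fin (n + 1) → F4)
    (hx : x ∈ traceDual (C : Set (Fin (n + 1) → F4)))
    (hy : y ∈ traceDual (C : Set (Fin (n + 1) → F4)))
    (hxsupp : {i | x i ≠ 0} ⊆ insert 0 A) (hysupp : {i | y i ≠ 0} ⊆ insert 0 B)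
    (hx0 : x 0 ≠ 0) (hy0 : y 0 ≠ 0) (hxy0 : x 0 ≠ y 0)
    (t t' : Fin (n + 1) → F4) (ht : t ∈ C) (ht' : t' ∈ C)
    (hagree : ∀ i ∈ A ∪ B, t i = t' i) :
    t 0 = t' 0 :=
  two_dual_words_determine_secret_general n C A B x y hx hy hxsupp hysupp hx0 hy0 hxy0 t t' ht ht'
    hagree
end

section
/- Let C be an additive even self-dual (n, 2^n) code over GF(4) (C = C^⊥ under the trace inner product, all codewords have even weight) whose minimum weight d satisfies d ≥ (n+2)/3. Then the supports of codewords of each nonzero weight hold a 1-design with possibly repeated blocks: for every w with 0 < w ≤ n, the number of codewords c ∈ C with wt(c) = w and cᵢ ≠ 0 is the same for every coordinate i ∈ {0, …, n−1}. -/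
/-- The Hamming weight: the number of nonzero coordinates. -/
noncomputable def wt {n : ℕ} (c : Fin n → F4) : ℕ := {i | c i ≠ 0}.ncard

/-!
For a coordinate `i` let `Qᵢ = ∑_{c ∈ C, cᵢ = 0} X ^ wt c`. The MacWilliams identity of the
self-dual code `C`, with weight `0` on coordinate `i`, writes `|C| Qᵢ` as a sum over `c ∈ C` in
which every nonzero codeword contributes a multiple of `(1 - X) ^ (d - 1)`. Hence
`D = Qᵢ - Qⱼ` is divisible by `(1 - X) ^ (d - 1)`; since all weights are even, `D` is even and
so also divisible by `(1 + X) ^ (d - 1)`; and `D` is divisible by `X ^ d`, being the difference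
of the enumerators of the codewords nonzero at `j` and at `i`. As `deg D ≤ n - 1 < 3d - 2`,
`D = 0`, and comparing coefficients gives the design property.
-/

open Polynomial Finset
open scoped Classical

noncomputable instance : Fintype F4 := Fintype.ofFinite _

namespace F4

theorem card_eq : Fintype.card F4 = 4 := by
  rw [← Nat.card_eq_fintype_card, GaloisField.card 2 2 two_ne_zero]
  norm_num

theorem pow_four (a : F4) : a ^ 4 = a := by
  simpa [card_eq] using FiniteField.pow_card a

end F4

theorem conj_add (a b : F4) : conj (a + b) = conj a + conj b := by simp only [conj, add_pow_char]

theorem conj_eq_zero {a : F4} : conj a = 0 ↔ a = 0 := pow_eq_zero_iff two_ne_zero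

theorem tr_add (a b : F4) : tr (a + b) = tr a + tr b := by
  simp only [tr, add_pow_char]
  ring

theorem tr_sum {ι : Type*} (s : Finset ι) (f : ι → F4) : tr (∑ i ∈ s, f i) = ∑ i ∈ s, tr (f i) :=
  map_sum (AddMonoidHom.mk' tr tr_add) f s

theorem tr_eq_zero_or_one (t : F4) : tr t = 0 ∨ tr t = 1 := by
  refine IsIdempotentElem.iff_eq_zero_or_one.1 ?_
  calc tr t * tr t = t ^ 2 + t ^ 4 := by rw [← sq, tr, add_pow_char]; ring
    _ = tr t := by rw [F4.pow_four, tr, add_comm]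

theorem exists_tr_ne_zero : ∃ t : F4, tr t ≠ 0 := by
  by_contra! h
  have hsub : (univ : Finset F4) ⊆ {0, 1} := fun t _ => by
    have ht : t * (t + 1) = 0 := by
      have := h t
      unfold tr at this
      linear_combination this
    rcases mul_eq_zero.1 ht with h0 | h1
    · simp [h0]
    · simp [eq_neg_of_add_eq_zero_left h1, CharTwo.neg_eq]
  have := (card_le_card hsub).trans (card_le_two (a := (0 : F4)) (b := 1))
  rw [card_univ, F4.card_eq] at this
  omega

theorem AddChar.map_sum_eq_prod {A M ι : Type*} [AddCommMonoid A] [CommMonoid M]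
    (ψ : AddChar A M) (s : Finset ι) (f : ι → A) : ψ (∑ i ∈ s, f i) = ∏ i ∈ s, ψ (f i) := by
  induction s using Finset.cons_induction with
  | empty => simp
  | cons a s ha ih => rw [sum_cons, prod_cons, AddChar.map_add_eq_mul, ih]

section TraceChar

variable (R : Type*) [CommRing R]

noncomputable def traceChar : AddChar F4 R where
  toFun t := if tr t = 0 then 1 else -1
  map_zero_eq_one' := by simp [tr]
  map_add_eq_mul' a b := by
    rcases tr_eq_zero_or_one a with ha | ha <;> rcases tr_eq_zero_or_one b with hb | hb <;>
      simp [tr_add, ha, hb, CharTwo.add_self_eq_zero]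

variable {R}

theorem traceChar_eq_one_iff [NeZero (2 : R)] {t : F4} : traceChar R t = 1 ↔ tr t = 0 := by
  have : (-1 : R) ≠ 1 := fun h => two_ne_zero (by linear_combination -h : (2 : R) = 0)
  simp [traceChar, this]

theorem traceChar_ne_one [NeZero (2 : R)] : traceChar R ≠ 1 := fun h => by
  obtain ⟨t, ht⟩ := exists_tr_ne_zero
  exact ht (traceChar_eq_one_iff.1 (by rw [h, AddChar.one_apply]))

variable [IsDomain R] [NeZero (2 : R)]

theorem sum_traceChar_mul (b : F4) :
    ∑ a, traceChar R (a * b) = if b = 0 then 4 else 0 := by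
  rw [AddChar.sum_mulShift b (AddChar.IsPrimitive.of_ne_one traceChar_ne_one), F4.card_eq]
  norm_num

theorem sum_traceChar_mul_mul_ite (b : F4) (t : R) :
    ∑ a, traceChar R (a * b) * (if a = 0 then 1 else t) = if b = 0 then 1 + 3 * t else 1 - t := by
  have hsplit : ∀ a : F4, traceChar R (a * b) * (if a = 0 then 1 else t) =
      traceChar R (a * b) * t + if a = 0 then 1 - t else 0 := fun a => by
    split_ifs with ha <;> simp [ha]
  simp only [hsplit, sum_add_distrib, ← sum_mul, sum_traceChar_mul, sum_ite_eq', mem_univ]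
  split_ifs <;> ring

end TraceChar

section MacWilliams

variable {R : Type*} [CommRing R] {n : ℕ}

/-- `tr (hermPairing x c)` is the trace inner product `x ⋆ c`. -/
noncomputable def hermPairing (x : Fin n → F4) : (Fin n → F4) →+ F4 :=
  AddMonoidHom.mk' (fun c => ∑ k, x k * conj (c k)) fun c c' => by
    simp only [Pi.add_apply, conj_add, mul_add, sum_add_distrib]

theorem hermPairing_apply (x c : Fin n → F4) : hermPairing x c = ∑ k, x k * conj (c k) := rfl

theorem mem_traceDual_iff {S : Set (Fin n → F4)} {x : Fin n → F4} :
    x ∈ traceDual S ↔ ∀ c ∈ S, tr (hermPairing x c) = 0 := by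
  simp [traceDual, hermPairing_apply, tr_sum]

theorem sum_traceChar_hermPairing_mul_prod (c : Fin n → F4) (f : Fin n → F4 → R) :
    ∑ x, traceChar R (hermPairing x c) * ∏ k, f k (x k) =
      ∏ k, ∑ a, traceChar R (a * conj (c k)) * f k a := by
  rw [Fintype.prod_sum]
  refine sum_congr rfl fun x _ => ?_
  rw [hermPairing_apply, AddChar.map_sum_eq_prod, prod_mul_distrib]

variable [IsDomain R] [NeZero (2 : R)]

theorem sum_traceChar_hermPairing (C : AddSubgroup (Fin n → F4)) (x : Fin n → F4) :
    ∑ c : C, traceChar R (hermPairing x c) = if x ∈ traceDual C then (Nat.card C : R) else 0 := by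
  have hsum := AddChar.sum_eq_ite ((traceChar R).compAddMonoidHom ((hermPairing x).comp C.subtype))
  simp only [AddChar.compAddMonoidHom_apply, AddMonoidHom.comp_apply, AddSubgroup.coe_subtype,
    AddChar.eq_zero_iff, traceChar_eq_one_iff, Subtype.forall] at hsum
  rw [hsum, Nat.card_eq_fintype_card]
  exact if_congr mem_traceDual_iff.symm rfl rfl

theorem macWilliams_of_selfDual (C : AddSubgroup (Fin n → F4))
    (hC : (C : Set (Fin n → F4)) = traceDual C) (t : Fin n → R) :
    (Nat.card C : R) * ∑ x : C, ∏ k, (if x.1 k = 0 then 1 else t k) =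
      ∑ c : C, ∏ k, (if c.1 k = 0 then 1 + 3 * t k else 1 - t k) := by
  set F : (Fin n → F4) → R := fun x => ∏ k, (if x k = 0 then 1 else t k)
  calc (Nat.card C : R) * ∑ x : C, F x
      = ∑ x, (if x ∈ traceDual C then (Nat.card C : R) else 0) * F x := by
        simp only [← hC, mul_sum, SetLike.mem_coe, ite_mul, zero_mul]
        rw [← sum_filter]
        exact (sum_subtype {x | x ∈ C} (fun x => by simp) fun x => (Nat.card C : R) * F x).symm
    _ = ∑ c : C, ∑ x, traceChar R (hermPairing x c) * F x := by
        simp only [← sum_traceChar_hermPairing, sum_mul]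
        exact sum_comm
    _ = ∑ c : C, ∏ k, (if c.1 k = 0 then 1 + 3 * t k else 1 - t k) := by
        refine sum_congr rfl fun c _ => ?_
        rw [sum_traceChar_hermPairing_mul_prod (f := fun k a => if a = 0 then 1 else t k)]
        simp only [sum_traceChar_mul_mul_ite, conj_eq_zero]

end MacWilliams

section WeightEnumerator

variable {n : ℕ}

theorem wt_eq_card (c : Fin n → F4) : wt c = #{k | c k ≠ 0} := by
  rw [wt, Set.ncard_eq_toFinset_card', Set.toFinset_ofPred]

theorem wt_le_pred_of_eq_zero {c : Fin n → F4} {i : Fin n} (hi : c i = 0) : wt c ≤ n - 1 := by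
  rw [wt_eq_card]
  calc #{k | c k ≠ 0} ≤ #(univ.erase i) := card_le_card ?_
    _ = n - 1 := by rw [card_erase_of_mem (mem_univ i), card_univ, Fintype.card_fin]
  exact fun k hk => mem_erase.2 ⟨fun hki => (mem_filter.1 hk).2 (hki ▸ hi), mem_univ k⟩

noncomputable def weightEnum (S : Finset (Fin n → F4)) : ℚ[X] := ∑ c ∈ S, X ^ wt c

theorem weightEnum_filter_add_filter_not (S : Finset (Fin n → F4)) (p : (Fin n → F4) → Prop)
    [DecidablePred p] : weightEnum {c ∈ S | p c} + weightEnum {c ∈ S | ¬p c} = weightEnum S :=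
  sum_filter_add_sum_filter_not S p _

theorem coeff_weightEnum (S : Finset (Fin n → F4)) (w : ℕ) :
    (weightEnum S).coeff w = #{c ∈ S | wt c = w} := by
  simp [weightEnum, finsetSum_coeff, coeff_X_pow, eq_comm]

theorem weightEnum_comp_neg_X {S : Finset (Fin n → F4)} (h : ∀ c ∈ S, Even (wt c)) :
    (weightEnum S).comp (-X) = weightEnum S := by
  simp only [weightEnum, Polynomial.sum_comp, X_pow_comp]
  exact sum_congr rfl fun c hc => (h c hc).neg_pow (X : ℚ[X])

theorem X_pow_dvd_weightEnum {S : Finset (Fin n → F4)} {d : ℕ} (h : ∀ c ∈ S, d ≤ wt c) :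
    X ^ d ∣ weightEnum S :=
  dvd_sum fun c hc => pow_dvd_pow X (h c hc)

theorem natDegree_weightEnum_le {S : Finset (Fin n → F4)} {m : ℕ} (h : ∀ c ∈ S, wt c ≤ m) :
    (weightEnum S).natDegree ≤ m :=
  natDegree_sum_le_of_forall_le S _ fun c hc => (natDegree_X_pow_le _).trans (h c hc)

end WeightEnumerator

section Shortened

variable {R : Type*} [CommRing R] {n : ℕ}

theorem prod_ite_ite_eq_ite_pow_wt (x : Fin n → F4) (i : Fin n) (r : R) :
    ∏ k, (if x k = 0 then 1 else if k = i then 0 else r) = if x i = 0 then r ^ wt x else 0 := by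
  split_ifs with hi
  · rw [wt_eq_card, ← prod_const, prod_filter]
    refine prod_congr rfl fun k _ => ?_
    by_cases hk : x k = 0
    · simp [hk]
    · simp [hk, show k ≠ i from fun h => hk (h ▸ hi)]
  · exact prod_eq_zero (mem_univ i) (by simp [hi])

theorem prod_one_add_three_mul_ite_eq_pow (i : Fin n) (r : R) :
    ∏ k, (1 + 3 * if k = i then 0 else r) = (1 + 3 * r) ^ (n - 1) := by
  rw [← mul_prod_erase univ _ (mem_univ i), if_pos rfl,
    prod_congr rfl fun k hk => by rw [if_neg (ne_of_mem_erase hk)], prod_const,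
    card_erase_of_mem (mem_univ i), card_univ, Fintype.card_fin]
  ring

theorem pow_wt_sub_one_dvd_prod_ite (c : Fin n → F4) (i : Fin n) (r : R) :
    (1 - r) ^ (wt c - 1) ∣
      ∏ k, (if c k = 0 then 1 + 3 * (if k = i then 0 else r) else 1 - if k = i then 0 else r) := by
  set s : Finset (Fin n) := ({k | c k ≠ 0} : Finset (Fin n)).erase i
  have hs : wt c - 1 ≤ #s := wt_eq_card c ▸ pred_card_le_card_erase
  rw [← prod_sdiff (subset_univ s)]
  refine dvd_mul_of_dvd_right ((pow_dvd_pow _ hs).trans (prod_const (1 - r) ▸ ?_)) _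
  refine dvd_of_eq (prod_congr rfl fun k hk => ?_)
  obtain ⟨hki, hk⟩ := mem_erase.1 hk
  simp [(mem_filter.1 hk).2, hki]

end Shortened

theorem Polynomial.isCoprime_one_sub_X_one_add_X {K : Type*} [Field K] [NeZero (2 : K)] :
    IsCoprime (1 - X : K[X]) (1 + X) := by
  refine ⟨C 2⁻¹, C 2⁻¹, ?_⟩
  have : (1 - X + (1 + X) : K[X]) = C 2 := by rw [map_ofNat]; ring
  rw [← mul_add, this, ← C_mul, inv_mul_cancel₀ two_ne_zero, C_1]

theorem Polynomial.eq_zero_of_comp_neg_X_eq_of_dvd {K : Type*} [Field K] [NeZero (2 : K)]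
    {D : K[X]} {d : ℕ} (heven : D.comp (-X) = D) (hX : X ^ d ∣ D) (hsub : (1 - X) ^ (d - 1) ∣ D)
    (hdeg : D.natDegree + 2 < 3 * d) : D = 0 := by
  have hadd : (1 + X) ^ (d - 1) ∣ D := by
    rw [← heven, dvd_comp_neg_X_iff]
    simpa [sub_eq_add_neg] using hsub
  have hXcop : IsCoprime (X : K[X]) ((1 - X) * (1 + X)) :=
    IsCoprime.mul_right ⟨1, 1, by ring⟩ ⟨-1, 1, by ring⟩
  have hdvd : X ^ d * ((1 - X) ^ (d - 1) * (1 + X) ^ (d - 1)) ∣ D :=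
    IsCoprime.mul_dvd (mul_pow (1 - X : K[X]) (1 + X) (d - 1) ▸ hXcop.pow) hX
      (isCoprime_one_sub_X_one_add_X.pow.mul_dvd hsub hadd)
  refine eq_zero_of_dvd_of_natDegree_lt hdvd ?_
  have h1 : (1 - X : K[X]).natDegree = 1 := by
    rw [show (1 - X : K[X]) = -(X - C 1) by rw [C_1]; ring, natDegree_neg, natDegree_X_sub_C]
  have h2 : (1 + X : K[X]).natDegree = 1 := by
    rw [add_comm, ← C_1, natDegree_X_add_C]
  have h1' : (1 - X : K[X]) ≠ 0 := ne_zero_of_natDegree_gt (h1 ▸ zero_lt_one)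
  have h2' : (1 + X : K[X]) ≠ 0 := ne_zero_of_natDegree_gt (h2 ▸ zero_lt_one)
  rw [natDegree_mul (pow_ne_zero _ X_ne_zero) (mul_ne_zero (pow_ne_zero _ h1') (pow_ne_zero _ h2')),
    natDegree_mul (pow_ne_zero _ h1') (pow_ne_zero _ h2'), natDegree_X_pow, natDegree_pow,
    natDegree_pow, h1, h2]
  omega

section Design

variable {n d : ℕ} {C : AddSubgroup (Fin n → F4)}

theorem one_sub_X_pow_dvd_card_mul_weightEnum_sub (hC : (C : Set (Fin n → F4)) = traceDual C)
    (hmin : ∀ c ∈ C, c ≠ 0 → d ≤ wt c) (i : Fin n) :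
    (1 - X : ℚ[X]) ^ (d - 1) ∣
      (Nat.card C : ℚ[X]) * weightEnum {c ∈ (C : Set (Fin n → F4)).toFinset | c i = 0} -
        (1 + 3 * X) ^ (n - 1) := by
  have hshort : weightEnum {c ∈ (C : Set (Fin n → F4)).toFinset | c i = 0} =
      ∑ x : C, ∏ k, (if x.1 k = 0 then 1 else if k = i then 0 else X) := by
    simp only [weightEnum, sum_filter, prod_ite_ite_eq_ite_pow_wt]
    exact (sum_set_coe (C : Set (Fin n → F4))).symm
  rw [hshort, macWilliams_of_selfDual C hC, ← add_sum_erase univ _ (mem_univ 0)]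
  simp only [ZeroMemClass.coe_zero, Pi.zero_apply, if_pos, prod_one_add_three_mul_ite_eq_pow,
    add_sub_cancel_left]
  refine dvd_sum fun c hc => (pow_dvd_pow _ ?_).trans (pow_wt_sub_one_dvd_prod_ite c.1 i X)
  have := hmin c c.2 fun h => (mem_erase.1 hc).1 (Subtype.ext h)
  omega

theorem one_sub_X_pow_dvd_weightEnum_sub (hC : (C : Set (Fin n → F4)) = traceDual C)
    (hmin : ∀ c ∈ C, c ≠ 0 → d ≤ wt c) (i j : Fin n) :
    (1 - X : ℚ[X]) ^ (d - 1) ∣ weightEnum {c ∈ (C : Set (Fin n → F4)).toFinset | c i = 0} -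
      weightEnum {c ∈ (C : Set (Fin n → F4)).toFinset | c j = 0} := by
  have hunit : IsUnit (Nat.card C : ℚ[X]) := by
    rw [← map_natCast Polynomial.C]
    exact isUnit_C.2 (isUnit_iff_ne_zero.2 (Nat.cast_ne_zero.2 Nat.card_pos.ne'))
  have h := dvd_sub (one_sub_X_pow_dvd_card_mul_weightEnum_sub hC hmin i)
    (one_sub_X_pow_dvd_card_mul_weightEnum_sub hC hmin j)
  rwa [sub_sub_sub_cancel_right, ← mul_sub, hunit.dvd_mul_left] at h

theorem weightEnum_filter_eq_zero_add_filter_ne_zero (i : Fin n) :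
    weightEnum {c ∈ (C : Set (Fin n → F4)).toFinset | c i = 0} +
      weightEnum {c ∈ (C : Set (Fin n → F4)).toFinset | c i ≠ 0} =
        weightEnum (C : Set (Fin n → F4)).toFinset :=
  weightEnum_filter_add_filter_not _ _

theorem X_pow_dvd_weightEnum_sub (hmin : ∀ c ∈ C, c ≠ 0 → d ≤ wt c) (i j : Fin n) :
    X ^ d ∣ weightEnum {c ∈ (C : Set (Fin n → F4)).toFinset | c i = 0} -
      weightEnum {c ∈ (C : Set (Fin n → F4)).toFinset | c j = 0} := by
  have hX (k : Fin n) : X ^ d ∣ weightEnum {c ∈ (C : Set (Fin n → F4)).toFinset | c k ≠ 0} :=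
    X_pow_dvd_weightEnum fun c hc => by
      simp only [mem_filter, Set.mem_toFinset, SetLike.mem_coe] at hc
      exact hmin c hc.1 fun h => hc.2 (congrFun h k)
  convert dvd_sub (hX j) (hX i) using 1
  linear_combination weightEnum_filter_eq_zero_add_filter_ne_zero (C := C) i -
    weightEnum_filter_eq_zero_add_filter_ne_zero j

theorem weightEnum_filter_eq_zero_eq (hC : (C : Set (Fin n → F4)) = traceDual C)
    (heven : ∀ c ∈ C, Even (wt c)) (hmin : ∀ c ∈ C, c ≠ 0 → d ≤ wt c) (hd : n + 2 ≤ 3 * d)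
    (i j : Fin n) :
    weightEnum {c ∈ (C : Set (Fin n → F4)).toFinset | c i = 0} =
      weightEnum {c ∈ (C : Set (Fin n → F4)).toFinset | c j = 0} := by
  have heven' (k : Fin n) := weightEnum_comp_neg_X (S := {c ∈ (C : Set _).toFinset | c k = 0})
    fun c hc => heven c (by simpa using (mem_filter.1 hc).1)
  have hdeg (k : Fin n) : (weightEnum {c ∈ (C : Set _).toFinset | c k = 0}).natDegree ≤ n - 1 :=
    natDegree_weightEnum_le fun c hc => wt_le_pred_of_eq_zero (mem_filter.1 hc).2
  rw [← sub_eq_zero]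
  refine eq_zero_of_comp_neg_X_eq_of_dvd (by rw [sub_comp, heven' i, heven' j])
    (X_pow_dvd_weightEnum_sub hmin i j) (one_sub_X_pow_dvd_weightEnum_sub hC hmin i j) ?_
  have := (natDegree_sub_le _ _).trans (max_le (hdeg i) (hdeg j))
  omega

theorem ncard_eq_coeff_weightEnum (w : ℕ) (i : Fin n) :
    ({c | c ∈ C ∧ wt c = w ∧ c i ≠ 0}.ncard : ℚ) =
      (weightEnum {c ∈ (C : Set (Fin n → F4)).toFinset | c i ≠ 0}).coeff w := by
  rw [coeff_weightEnum, Nat.cast_inj, Set.ncard_eq_toFinset_card', Set.toFinset_ofPred]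
  congr 1
  ext c
  simp only [mem_filter, mem_univ, true_and, Set.mem_toFinset, SetLike.mem_coe]
  tauto

end Design

theorem even_self_dual_supports_one_design_general (n d : ℕ) (C : AddSubgroup (Fin n → F4))
    (hselfdual : (C : Set (Fin n → F4)) = traceDual (C : Set (Fin n → F4)))
    (heven : ∀ c ∈ C, Even (wt c))
    (hmin : ∀ c ∈ C, c ≠ 0 → d ≤ wt c)
    (hd : n + 2 ≤ 3 * d) :
    ∀ w : ℕ, 0 < w → w ≤ n → ∀ i j : Fin n,
      {c : Fin n → F4 | c ∈ C ∧ wt c = w ∧ c i ≠ 0}.ncard =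
        {c : Fin n → F4 | c ∈ C ∧ wt c = w ∧ c j ≠ 0}.ncard := by
  intro w _ _ i j
  have hsupp : weightEnum {c ∈ (C : Set (Fin n → F4)).toFinset | c i ≠ 0} =
      weightEnum {c ∈ (C : Set (Fin n → F4)).toFinset | c j ≠ 0} := by
    linear_combination weightEnum_filter_eq_zero_add_filter_ne_zero (C := C) i -
      weightEnum_filter_eq_zero_add_filter_ne_zero j -
        weightEnum_filter_eq_zero_eq hselfdual heven hmin hd i j
  exact_mod_cast (ncard_eq_coeff_weightEnum w i).trans (hsupp ▸ (ncard_eq_coeff_weightEnum w j).symm)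

/-- For an additive even self-dual `(n, 2ⁿ)` code over `GF(4)` of minimum weight
`d ≥ (n+2)/3`, the supports of the codewords of each nonzero weight hold a 1-design
(with possibly repeated blocks): for each weight `w`, the number of codewords of weight
`w` that are nonzero at coordinate `i` is independent of `i`. -/
theorem even_self_dual_supports_one_design (n d : ℕ) (C : AddSubgroup (Fin n → F4))
    (hcard : Nat.card C = 2 ^ n)
    (hselfdual : (C : Set (Fin n → F4)) = traceDual (C : Set (Fin n → F4)))
    (heven : ∀ c ∈ C, Even (wt c))
    (hmin : ∀ c ∈ C, c ≠ 0 → d ≤ wt c)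
    (hex : ∃ c ∈ C, c ≠ 0 ∧ wt c = d)
    (hd : n + 2 ≤ 3 * d) :
    ∀ w : ℕ, 0 < w → w ≤ n → ∀ i j : Fin n,
      {c : Fin n → F4 | c ∈ C ∧ wt c = w ∧ c i ≠ 0}.ncard =
        {c : Fin n → F4 | c ∈ C ∧ wt c = w ∧ c j ≠ 0}.ncard :=
  even_self_dual_supports_one_design_general n d C hselfdual heven hmin hd
end

section
/- Let C be an additive code of length n over GF(4) with coordinates indexed 0, …, n−1, and suppose the trace dual C^⊥ has minimum weight d ≥ 2. If A ⊆ {1, …, n−1} has |A| < d − 1, then the shares in A cannot recover the secret: there exist codewords t, t' ∈ C with tᵢ = t'ᵢ for all i ∈ A but t₀ ≠ t'₀. -/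
/-
If the shares in `A` determined the secret, every codeword vanishing on `A` would vanish at `0`,
i.e. `e₀` would be orthogonal to `C ∩ E`, where `E` is the space of vectors vanishing on `A`.
The trace inner product is a symmetric nondegenerate bilinear form over `GF(2)`, so
`(C ∩ E)^⊥ = C^⊥ + E^⊥`, and `E^⊥` is the space of vectors supported on `A`. Writing `e₀ = u + f`
accordingly gives a nonzero `u ∈ C^⊥` supported on `A ∪ {0}`, of weight at most `|A| + 1 < d`.
-/

open LinearMap (BilinForm)

namespace LinearMap.BilinForm

variable {K V : Type*} [Field K] [AddCommGroup V] [Module K V]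

theorem orthogonal_sup (B : BilinForm K V) (W W' : Submodule K V) :
    B.orthogonal (W ⊔ W') = B.orthogonal W ⊓ B.orthogonal W' := by
  refine le_antisymm (le_inf (B.orthogonal_le le_sup_left) (B.orthogonal_le le_sup_right)) ?_
  rintro x ⟨hxW, hxW'⟩
  rw [mem_orthogonal_iff]
  intro y hy
  obtain ⟨w, hw, w', hw', rfl⟩ := Submodule.mem_sup.mp hy
  simp only [map_add, LinearMap.add_apply]
  rw [(mem_orthogonal_iff.mp hxW) w hw, (mem_orthogonal_iff.mp hxW') w' hw', add_zero]

theorem orthogonal_inf [FiniteDimensional K V] {B : BilinForm K V} (hB : B.Nondegenerate)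
    (hB₀ : B.IsRefl) (W W' : Submodule K V) :
    B.orthogonal (W ⊓ W') = B.orthogonal W ⊔ B.orthogonal W' := by
  rw [← B.orthogonal_orthogonal hB hB₀ (_ ⊔ _), orthogonal_sup,
    B.orthogonal_orthogonal hB hB₀, B.orthogonal_orthogonal hB hB₀]

end LinearMap.BilinForm

theorem Algebra.exists_trace_mul_ne_zero (K L : Type*) [Field K] [Field L] [Algebra K L]
    [FiniteDimensional K L] [Algebra.IsSeparable K L] {a : L} (ha : a ≠ 0) :
    ∃ z, Algebra.trace K L (z * a) ≠ 0 := by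
  by_contra! h
  exact ha ((traceForm_nondegenerate K L).2 a fun z => h z)

open FiniteField

namespace F4

theorem pow_four_eq_self (x : F4) : x ^ 4 = x := by
  have : Fintype F4 := Fintype.ofFinite F4
  have hcard : Fintype.card F4 = 4 := by
    rw [← Nat.card_eq_fintype_card, GaloisField.card 2 2 two_ne_zero]
    norm_num
  simpa [hcard] using FiniteField.pow_card x

theorem algebraMap_trace (x : F4) :
    algebraMap (ZMod 2) F4 (Algebra.trace (ZMod 2) F4 x) = tr x := by
  rw [algebraMap_trace_eq_sum_pow, GaloisField.finrank 2 two_ne_zero]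
  simp [tr, Finset.sum_range_succ]

theorem trace_mul_sq_comm (a b : F4) :
    Algebra.trace (ZMod 2) F4 (a * b ^ 2) = Algebra.trace (ZMod 2) F4 (b * a ^ 2) := by
  apply (algebraMap (ZMod 2) F4).injective
  simp only [algebraMap_trace, tr]
  linear_combination a ^ 2 * pow_four_eq_self b - b ^ 2 * pow_four_eq_self a

end F4

/-- The trace inner product `x ⋆ y = ∑ Tr(xᵢ ȳᵢ)`, as a bilinear form over the prime field. -/

noncomputable def traceInner (ι : Type*) [Fintype ι] : BilinForm (ZMod 2) (ι → F4) :=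
  ∑ i : ι, (Algebra.traceForm (ZMod 2) F4).compl₁₂ (LinearMap.proj i)
    ((frobeniusAlgHom (ZMod 2) F4).toLinearMap ∘ₗ LinearMap.proj i)

section traceInner

variable {ι : Type*} [Fintype ι]

theorem traceInner_apply (x y : ι → F4) :
    traceInner ι x y = ∑ i, Algebra.trace (ZMod 2) F4 (x i * y i ^ 2) := by
  simp [traceInner, LinearMap.sum_apply, coe_frobeniusAlgHom]

theorem traceInner_isSymm : (traceInner ι).IsSymm :=
  ⟨fun x y => by simp only [traceInner_apply, F4.trace_mul_sq_comm]⟩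

theorem traceInner_single_left [DecidableEq ι] (j : ι) (z : F4) (y : ι → F4) :
    traceInner ι (Pi.single j z) y = Algebra.trace (ZMod 2) F4 (z * y j ^ 2) := by
  rw [traceInner_apply, Finset.sum_eq_single j (fun i _ hij => by simp [hij]) (by simp)]
  simp

theorem orthogonal_pi_bot_traceInner (s : Set ι) :
    (traceInner ι).orthogonal (Submodule.pi s fun _ => ⊥) = Submodule.pi sᶜ fun _ => ⊥ := by
  classical
  ext y
  simp only [BilinForm.mem_orthogonal_iff, Submodule.mem_pi, Submodule.mem_bot]
  constructor
  · intro hy i hi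
    by_contra hyi
    obtain ⟨z, hz⟩ := Algebra.exists_trace_mul_ne_zero (ZMod 2) F4 (pow_ne_zero 2 hyi)
    have hsingle : ∀ j ∈ s, (Pi.single i z : ι → F4) j = 0 := fun j hj => by
      simp [ne_of_mem_of_not_mem hj hi]
    exact hz (traceInner_single_left i z y ▸ hy _ hsingle)
  · intro hy x hx
    rw [traceInner_apply]
    refine Finset.sum_eq_zero fun i _ => ?_
    by_cases hi : i ∈ s
    · simp [hx i hi]
    · simp [hy i hi]

theorem traceInner_nondegenerate : (traceInner ι).Nondegenerate := by
  refine traceInner_isSymm.isRefl.nondegenerate_iff_separatingRight.mpr fun y hy => ?_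
  have hmem : y ∈ (traceInner ι).orthogonal (Submodule.pi ∅ fun _ => ⊥) :=
    BilinForm.mem_orthogonal_iff.mpr fun x _ => hy x
  rwa [orthogonal_pi_bot_traceInner, Set.compl_empty, Submodule.pi_univ_bot] at hmem

end traceInner

theorem mem_traceDual_iff_mem_orthogonal {n : ℕ} (C : AddSubgroup (Fin n → F4)) (x : Fin n → F4) :
    x ∈ traceDual (C : Set (Fin n → F4)) ↔
      x ∈ (traceInner (Fin n)).orthogonal (AddSubgroup.toZModSubmodule 2 C) := by
  simp only [traceDual, BilinForm.mem_orthogonal_iff, AddSubgroup.mem_toZModSubmodule,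
    traceInner_isSymm.eq _ x, traceInner_apply, SetLike.mem_coe]
  refine forall₂_congr fun c _ => ?_
  rw [← (algebraMap (ZMod 2) F4).injective.eq_iff, map_zero, map_sum]
  simp only [F4.algebraMap_trace, conj]

theorem exists_mem_traceDual_of_forall_eq_zero {n : ℕ} (C : AddSubgroup (Fin n → F4))
    {A : Set (Fin n)} {j : Fin n} (hj : j ∉ A)
    (hdet : ∀ c ∈ C, (∀ i ∈ A, c i = 0) → c j = 0) :
    ∃ u ∈ traceDual (C : Set (Fin n → F4)), u j = 1 ∧ ∀ i ∉ insert j A, u i = 0 := by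
  have hsingle : Pi.single j 1 ∈
      (traceInner (Fin n)).orthogonal (AddSubgroup.toZModSubmodule 2 C ⊓ Submodule.pi A fun _ => ⊥) := by
    rw [BilinForm.mem_orthogonal_iff]
    rintro c ⟨hc, hcA⟩
    rw [traceInner_isSymm.eq, traceInner_single_left,
      hdet c hc (by simpa [Submodule.mem_pi] using hcA)]
    simp
  rw [BilinForm.orthogonal_inf traceInner_nondegenerate traceInner_isSymm.isRefl,
    orthogonal_pi_bot_traceInner] at hsingle
  obtain ⟨u, hu, f, hf, hsum⟩ := Submodule.mem_sup.mp hsingle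
  have hf : ∀ i ∉ A, f i = 0 := by simpa [Submodule.mem_pi] using hf
  have hu_eq : ∀ i, u i = (Pi.single j 1 : Fin n → F4) i - f i := fun i => by
    rw [← hsum, Pi.add_apply, add_sub_cancel_right]
  refine ⟨u, (mem_traceDual_iff_mem_orthogonal C u).mpr hu, ?_, fun i hi => ?_⟩
  · rw [hu_eq, hf j hj, sub_zero, Pi.single_eq_same]
  · rw [Set.mem_insert_iff, not_or] at hi
    rw [hu_eq, hf i hi.2, sub_zero, Pi.single_eq_of_ne hi.1]

theorem wt_le_ncard_of_forall_notMem_eq_zero {n : ℕ} {u : Fin n → F4} {s : Set (Fin n)}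
    (hu : ∀ i ∉ s, u i = 0) : wt u ≤ s.ncard :=
  Set.ncard_le_ncard (fun i hi => by_contra fun his => hi (hu i his))

theorem small_groups_cannot_recover_general (n d : ℕ) (C : AddSubgroup (Fin (n + 1) → F4))
    (hmin : ∀ x ∈ traceDual (C : Set (Fin (n + 1) → F4)), x ≠ 0 → d ≤ wt x)
    (A : Set (Fin (n + 1))) (hA : 0 ∉ A) (hAcard : A.ncard < d - 1) :
    ∃ t ∈ C, ∃ t' ∈ C, (∀ i ∈ A, t i = t' i) ∧ t 0 ≠ t' 0 := by
  by_contra! hdet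
  obtain ⟨u, hu, hu0, hsupp⟩ := exists_mem_traceDual_of_forall_eq_zero C hA
    fun c hc hcA => hdet c hc 0 C.zero_mem hcA
  have hd : d ≤ wt u := hmin u hu fun h => by simp [h] at hu0
  have hwt : wt u ≤ A.ncard + 1 :=
    (wt_le_ncard_of_forall_notMem_eq_zero hsupp).trans (Set.ncard_insert_le 0 A)
  omega

/-- If the trace dual of `C` has minimum weight `d ≥ 2` and `A` is a set of at most
`d - 2` participants (so `|A| < d - 1`), then the shares in `A` cannot recover the
secret: there are codewords agreeing on `A` with different secret coordinates. -/
theorem small_groups_cannot_recover (n d : ℕ) (C : AddSubgroup (Fin (n + 1) → F4))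
    (hd2 : 2 ≤ d)
    (hmin : ∀ x ∈ traceDual (C : Set (Fin (n + 1) → F4)), x ≠ 0 → d ≤ wt x)
    (hex : ∃ x ∈ traceDual (C : Set (Fin (n + 1) → F4)), x ≠ 0 ∧ wt x = d)
    (A : Set (Fin (n + 1))) (hA : 0 ∉ A) (hAcard : A.ncard < d - 1) :
    ∃ t ∈ C, ∃ t' ∈ C, (∀ i ∈ A, t i = t' i) ∧ t 0 ≠ t' 0 :=
  small_groups_cannot_recover_general n d C hmin A hA hAcard
end

section
/- In the hexacode 𝒢₆ ⊆ GF(4)⁶ (the GF(4)-linear span of (1,0,0,1,ω,ω), (0,1,0,ω,1,ω), (0,0,1,ω,ω,1)), no codeword of weight 6 c-covers a codeword of weight 4; consequently all pairs of access groups arising from weight-4 and weight-6 codewords belong to the minimal access structure of the secret sharing scheme based on 𝒢₆. -/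
/-- `a` is componentwisely covered (c-covered) by `b`: every nonzero component of `a`
equals the corresponding component of `b`. -/
def ccov {n : ℕ} (a b : Fin n → F4) : Prop := ∀ i, a i ≠ 0 → b i = a i

/-- The hexacode: the `GF(4)`-linear span of `(1,0,0,1,ω,ω)`, `(0,1,0,ω,1,ω)`,
`(0,0,1,ω,ω,1)`. -/
noncomputable def hexacode (ω : F4) : Submodule F4 (Fin 6 → F4) :=
  Submodule.span F4 {![1,0,0,1,ω,ω], ![0,1,0,ω,1,ω], ![0,0,1,ω,ω,1]}

section GoldenRoot

variable {K : Type*} [Field K] {ω : K}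

theorem ne_zero_of_sq_eq_add_one (hω : ω ^ 2 = ω + 1) : ω ≠ 0 := by
  rintro rfl
  exact one_ne_zero (by linear_combination -hω)

theorem add_mul_ne_zero_or_mul_add_ne_zero (hω : ω ^ 2 = ω + 1) (p : K) {q : K}
    (hq : q ≠ 0) : p + q * ω ≠ 0 ∨ p * ω + q ≠ 0 := by
  by_contra! ⟨h₁, h₂⟩
  exact mul_ne_zero hq (ne_zero_of_sq_eq_add_one hω)
    (by linear_combination ω * h₁ - h₂ - q * hω)

end GoldenRoot

section Weight

variable {n : ℕ}

theorem forall_ne_zero_of_wt_eq {c : Fin n → F4} (hc : wt c = n) (i : Fin n) : c i ≠ 0 := by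
  have hsupp : {i | c i ≠ 0} = Set.univ := by
    rw [Set.eq_univ_iff_ncard, Nat.card_fin]
    exact hc
  exact Set.eq_univ_iff_forall.mp hsupp i

theorem three_le_wt {c : Fin n → F4} (i j k : Fin n) (hij : i ≠ j) (hik : i ≠ k)
    (hjk : j ≠ k) (hi : c i ≠ 0) (hj : c j ≠ 0) (hk : c k ≠ 0) : 3 ≤ wt c := by
  have hsub : ({i, j, k} : Set (Fin n)) ⊆ {i | c i ≠ 0} := by
    rintro l (rfl | rfl | rfl) <;> assumption
  calc 3 = ({i, j, k} : Set (Fin n)).ncard :=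
        (Set.ncard_eq_three.mpr ⟨i, j, k, hij, hik, hjk, rfl⟩).symm
    _ ≤ wt c := Set.ncard_le_ncard hsub

theorem wt_sub_add_wt_of_ccov {a b : Fin n → F4} (hb : ∀ i, b i ≠ 0) (hab : ccov a b) :
    wt (b - a) + wt a = n := by
  have hsupp : {i | (b - a) i ≠ 0} = {i | a i ≠ 0}ᶜ := by
    ext i
    by_cases ha : a i = 0
    · simp [ha, hb i]
    · simp [ha, hab i ha]
  rw [wt, wt, hsupp, add_comm, Set.ncard_add_ncard_compl, Nat.card_fin]

end Weight

section Hexacode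

variable {ω : F4}

theorem exists_eq_of_mem_hexacode {c : Fin 6 → F4} (hc : c ∈ hexacode ω) :
    ∃ p q r : F4,
      c = ![p, q, r, p + q * ω + r * ω, p * ω + q + r * ω, p * ω + q * ω + r] := by
  obtain ⟨p, _, hqr, rfl⟩ := Submodule.mem_span_insert.mp hc
  obtain ⟨q, _, hr, rfl⟩ := Submodule.mem_span_insert.mp hqr
  obtain ⟨r, rfl⟩ := Submodule.mem_span_singleton.mp hr
  refine ⟨p, q, r, ?_⟩
  ext i
  fin_cases i <;> simp [add_assoc]

theorem three_le_wt_of_mem_hexacode (hω : ω ^ 2 = ω + 1) {c : Fin 6 → F4}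
    (hc : c ∈ hexacode ω) (hc0 : c ≠ 0) : 3 ≤ wt c := by
  obtain ⟨p, q, r, rfl⟩ := exists_eq_of_mem_hexacode hc
  have hω0 := ne_zero_of_sq_eq_add_one hω
  by_cases hp : p = 0 <;> by_cases hq : q = 0 <;> by_cases hr : r = 0
  · simp [hp, hq, hr] at hc0
  · exact three_le_wt 2 3 4 (by decide) (by decide) (by decide)
      (by simpa) (by simp [hp, hq, hr, hω0]) (by simp [hp, hq, hr, hω0])
  · exact three_le_wt 1 3 4 (by decide) (by decide) (by decide)
      (by simpa) (by simp [hp, hq, hr, hω0]) (by simp [hp, hq, hr])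
  · rcases add_mul_ne_zero_or_mul_add_ne_zero hω q hr with h | h
    · exact three_le_wt 1 2 4 (by decide) (by decide) (by decide)
        (by simpa) (by simpa) (by simpa [hp])
    · exact three_le_wt 1 2 5 (by decide) (by decide) (by decide)
        (by simpa) (by simpa) (by simpa [hp])
  · exact three_le_wt 0 3 4 (by decide) (by decide) (by decide)
      (by simpa) (by simp [hp, hq, hr]) (by simp [hp, hq, hr, hω0])
  · rcases add_mul_ne_zero_or_mul_add_ne_zero hω p hr with h | h
    · exact three_le_wt 0 2 3 (by decide) (by decide) (by decide)
        (by simpa) (by simpa) (by simpa [hq])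
    · exact three_le_wt 0 2 5 (by decide) (by decide) (by decide)
        (by simpa) (by simpa) (by simpa [hq])
  · rcases add_mul_ne_zero_or_mul_add_ne_zero hω p hq with h | h
    · exact three_le_wt 0 1 3 (by decide) (by decide) (by decide)
        (by simpa) (by simpa) (by simpa [hr])
    · exact three_le_wt 0 1 4 (by decide) (by decide) (by decide)
        (by simpa) (by simpa) (by simpa [hr])
  · exact three_le_wt 0 1 2 (by decide) (by decide) (by decide) (by simpa) (by simpa) (by simpa)

end Hexacode

/-- In the hexacode, no codeword of weight 6 c-covers a codeword of weight 4;
consequently all pairs of access groups arising from weight-4 and weight-6 codewords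
belong to the minimal access structure. -/
theorem hexacode_weight_six_not_ccover_weight_four (ω : F4) (hω : ω ^ 2 = ω + 1)
    (c₁ c₂ : Fin 6 → F4) (h₁ : c₁ ∈ hexacode ω) (h₂ : c₂ ∈ hexacode ω)
    (hw₁ : wt c₁ = 6) (hw₂ : wt c₂ = 4) :
    ¬ ccov c₂ c₁ := by
  intro hcov
  have hwd : wt (c₁ - c₂) = 2 := by
    have := wt_sub_add_wt_of_ccov (forall_ne_zero_of_wt_eq hw₁) hcov
    omega
  have hd0 : c₁ - c₂ ≠ 0 := by
    rintro hd
    rw [hd] at hwd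
    simp [wt] at hwd
  have := three_le_wt_of_mem_hexacode hω (sub_mem h₁ h₂) hd0
  omega
end

section
/- Let QC₁₂ ⊆ GF(4)¹² be the GF(2)-linear span of the twelve vectors (0,0,0,0,0,0,1,1,1,1,1,1), (0,0,0,0,0,0,ω,ω,ω,ω,ω,ω), (1,1,1,1,1,1,0,0,0,0,0,0), (ω,ω,ω,ω,ω,ω,0,0,0,0,0,0), (0,0,0,1,ω,ω̄,0,0,0,1,ω,ω̄), (0,0,0,ω,ω̄,1,0,0,0,ω,ω̄,1), (1,ω̄,ω,0,0,0,1,ω̄,ω,0,0,0), (ω,1,ω̄,0,0,0,ω,1,ω̄,0,0,0), (0,0,0,1,ω̄,ω,ω,ω̄,1,0,0,0), (0,0,0,ω,1,ω̄,1,ω,ω̄,0,0,0), (1,ω,ω̄,0,0,0,0,0,0,ω̄,ω,1), (ω̄,1,ω,0,0,0,0,0,0,1,ω̄,ω) (the dodecacode). Then |QC₁₂| = 2¹², QC₁₂ is self-dual with respect to the trace inner product, every codeword has even weight, and its weight distribution is A₆ = 396, A₈ = 1485, A₁₀ = 1980, A₁₂ = 234, with no nonzero codewords of any other weight; in particular the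 minimum weight is 6. -/
/-- The dodecacode `QC₁₂`: the `GF(2)`-linear span of the twelve listed generators,
where `ω̄ = ω²`. -/
noncomputable def dodecacode (ω : F4) : Submodule (ZMod 2) (Fin 12 → F4) :=
  Submodule.span (ZMod 2)
    { ![0,0,0,0,0,0,1,1,1,1,1,1],
      ![0,0,0,0,0,0,ω,ω,ω,ω,ω,ω],
      ![1,1,1,1,1,1,0,0,0,0,0,0],
      ![ω,ω,ω,ω,ω,ω,0,0,0,0,0,0],
      ![0,0,0,1,ω,ω^2,0,0,0,1,ω,ω^2],
      ![0,0,0,ω,ω^2,1,0,0,0,ω,ω^2,1],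
      ![1,ω^2,ω,0,0,0,1,ω^2,ω,0,0,0],
      ![ω,1,ω^2,0,0,0,ω,1,ω^2,0,0,0],
      ![0,0,0,1,ω^2,ω,ω,ω^2,1,0,0,0],
      ![0,0,0,ω,1,ω^2,1,ω,ω^2,0,0,0],
      ![1,ω,ω^2,0,0,0,0,0,0,ω^2,ω,1],
      ![ω^2,1,ω,0,0,0,0,0,0,1,ω^2,ω] }

/-!
In the `GF(2)`-basis `1, ω` of `GF(4)`, coordinates identify `GF(4)¹²` with `(GF(2)²)¹²` and turn
the trace inner product `Tr(x ȳ)` into the symplectic form `Σⱼ (aⱼ b'ⱼ + bⱼ a'ⱼ)`, because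
`Tr 1 = 0` and `Tr ω = 1`. Packing such a vector into the base-4 digits of a natural number turns
addition into bitwise xor, which makes it feasible to run through all `2¹²` `GF(2)`-combinations
of the twelve generators by evaluation and read off the weight distribution. In particular no
nontrivial combination vanishes, so the code has dimension 12, half the dimension of the
nondegenerate symplectic space; as the generators are pairwise orthogonal, the code lies in, hence
equals, its orthogonal complement.
-/

open Finset

section Coordinates

variable {ω : F4}

noncomputable def ofCoords (ω : F4) : ZMod 2 × ZMod 2 →ₗ[ZMod 2] F4 :=
  (LinearMap.toSpanSingleton (ZMod 2) F4 1).coprod (LinearMap.toSpanSingleton (ZMod 2) F4 ω)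

lemma ofCoords_apply (p : ZMod 2 × ZMod 2) :
    ofCoords ω p = algebraMap (ZMod 2) F4 p.1 + algebraMap (ZMod 2) F4 p.2 * ω := by
  simp [ofCoords, Algebra.smul_def]

variable (hω : ω ^ 2 = ω + 1)
include hω

lemma ofCoords_injective : Function.Injective (ofCoords ω) := by
  have two_cases : ∀ x : ZMod 2, x = 0 ∨ x = 1 := by decide
  refine (injective_iff_map_eq_zero _).2 fun ⟨a, b⟩ h => ?_
  rcases two_cases a with rfl | rfl <;> rcases two_cases b with rfl | rfl <;>
    simp [ofCoords_apply] at h ⊢ <;> grind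

noncomputable def coordEquiv : (ZMod 2 × ZMod 2) ≃ₗ[ZMod 2] F4 :=
  LinearEquiv.ofBijective (ofCoords ω) <| (ofCoords_injective hω).bijective_of_nat_card_le <| by
    rw [GaloisField.card 2 2 two_ne_zero, Nat.card_eq_fintype_card]
    simp

lemma tr_ofCoords_mul_conj (p q : ZMod 2 × ZMod 2) :
    tr (ofCoords ω p * conj (ofCoords ω q)) = algebraMap (ZMod 2) F4 (p.1 * q.2 + p.2 * q.1) := by
  have idem (a : ZMod 2) : algebraMap (ZMod 2) F4 a ^ 2 = algebraMap (ZMod 2) F4 a := by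
    rw [← map_pow, ZMod.pow_card]
  simp only [ofCoords_apply, tr, conj, map_add, map_mul]
  grind

end Coordinates

section Vectors

variable {ω : F4} (hω : ω ^ 2 = ω + 1) {n : ℕ}

noncomputable def piCoordEquiv (n : ℕ) : (Fin n → ZMod 2 × ZMod 2) ≃ₗ[ZMod 2] (Fin n → F4) :=
  LinearEquiv.piCongrRight fun _ => coordEquiv hω

lemma piCoordEquiv_apply (x : Fin n → ZMod 2 × ZMod 2) (j : Fin n) :
    piCoordEquiv hω n x j = ofCoords ω (x j) :=
  rfl

lemma wt_piCoordEquiv (x : Fin n → ZMod 2 × ZMod 2) :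
    wt (piCoordEquiv hω n x) = hammingNorm x := by
  simp only [wt, hammingNorm, piCoordEquiv_apply, map_ne_zero_iff _ (ofCoords_injective hω)]
  rw [← Set.ncard_coe_finset, coe_filter]
  simp

end Vectors

section Symplectic

variable {n : ℕ}

def symplecticForm (n : ℕ) : LinearMap.BilinForm (ZMod 2) (Fin n → ZMod 2 × ZMod 2) :=
  LinearMap.mk₂ (ZMod 2) (fun x y => ∑ j, ((x j).1 * (y j).2 + (x j).2 * (y j).1))
    (fun _ _ _ => by
      simp only [Pi.add_apply, Prod.fst_add, Prod.snd_add, add_mul, sum_add_distrib]; ring)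
    (fun _ _ _ => by
      simp only [Pi.smul_apply, Prod.smul_fst, Prod.smul_snd, smul_eq_mul, mul_sum, mul_add,
        mul_assoc])
    (fun _ _ _ => by
      simp only [Pi.add_apply, Prod.fst_add, Prod.snd_add, mul_add, sum_add_distrib]; ring)
    (fun _ _ _ => by
      simp only [Pi.smul_apply, Prod.smul_fst, Prod.smul_snd, smul_eq_mul, mul_sum, mul_add,
        mul_left_comm])

lemma symplecticForm_apply (x y : Fin n → ZMod 2 × ZMod 2) :
    symplecticForm n x y = ∑ j, ((x j).1 * (y j).2 + (x j).2 * (y j).1) :=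
  rfl

lemma symplecticForm_comm (x y : Fin n → ZMod 2 × ZMod 2) :
    symplecticForm n x y = symplecticForm n y x := by
  simp only [symplecticForm_apply]
  exact sum_congr rfl fun _ _ => by ring

lemma symplecticForm_nondegenerate : (symplecticForm n).Nondegenerate := by
  refine (LinearMap.IsRefl.nondegenerate_iff_separatingLeft
    fun x y h => symplecticForm_comm x y ▸ h).2 fun x hx => funext fun j => ?_
  have h₁ := hx (Pi.single j (0, 1))
  have h₂ := hx (Pi.single j (1, 0))
  simp [symplecticForm_apply, Pi.single_apply, apply_ite] at h₁ h₂
  exact Prod.ext h₁ h₂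

lemma sum_tr_mul_conj_piCoordEquiv {ω : F4} (hω : ω ^ 2 = ω + 1)
    (x y : Fin n → ZMod 2 × ZMod 2) :
    ∑ j, tr (piCoordEquiv hω n x j * conj (piCoordEquiv hω n y j)) =
      algebraMap (ZMod 2) F4 (symplecticForm n x y) := by
  simp only [piCoordEquiv_apply, tr_ofCoords_mul_conj hω, symplecticForm_apply, map_sum]

lemma traceDual_image_piCoordEquiv {ω : F4} (hω : ω ^ 2 = ω + 1)
    (D : Submodule (ZMod 2) (Fin n → ZMod 2 × ZMod 2)) :
    traceDual (piCoordEquiv hω n '' D) = piCoordEquiv hω n '' (symplecticForm n).orthogonal D := by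
  ext x
  obtain ⟨y, rfl⟩ := (piCoordEquiv hω n).surjective x
  simp only [traceDual, Set.mem_ofPred_eq, Set.forall_mem_image, sum_tr_mul_conj_piCoordEquiv hω,
    (piCoordEquiv hω n).injective.mem_set_image, SetLike.mem_coe,
    LinearMap.BilinForm.mem_orthogonal_iff, map_eq_zero_iff _ (algebraMap (ZMod 2) F4).injective,
    symplecticForm_comm y]

end Symplectic

lemma LinearMap.BilinForm.orthogonal_eq_self {K V : Type*} [Field K] [AddCommGroup V]
    [Module K V] [FiniteDimensional K V] {B : LinearMap.BilinForm K V} (hB : B.Nondegenerate)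
    {W : Submodule K V} (hW : W ≤ B.orthogonal W)
    (hdim : 2 * Module.finrank K W = Module.finrank K V) :
    B.orthogonal W = W :=
  (Submodule.eq_of_le_of_finrank_eq hW (by rw [B.finrank_orthogonal hB]; omega)).symm

section Words

def bit (w k : ℕ) : ZMod 2 := (w / 2 ^ k % 2 : ℕ)

lemma bit_eq_zero_iff {w k : ℕ} : bit w k = 0 ↔ w / 2 ^ k % 2 = 0 := by
  rw [bit, ZMod.natCast_eq_zero_iff, Nat.dvd_iff_mod_eq_zero, Nat.mod_mod]

lemma bit_xor (a b k : ℕ) : bit (a ^^^ b) k = bit a k + bit b k := by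
  simp only [bit, Nat.xor_div_two_pow, Nat.xor_mod_two_eq, ZMod.natCast_mod, Nat.cast_add]

lemma bit_add (w k l : ℕ) : bit w (k + l) = bit (w / 2 ^ l) k := by
  rw [bit, bit, Nat.div_div_eq_div_mul, pow_add, mul_comm]

def decodeWord (n w : ℕ) : Fin n → ZMod 2 × ZMod 2 :=
  fun j => (bit w (2 * j), bit w (2 * j + 1))

@[simp]
lemma decodeWord_zero (n : ℕ) : decodeWord n 0 = 0 := by
  funext j
  simp [decodeWord, bit]

lemma decodeWord_xor (n a b : ℕ) : decodeWord n (a ^^^ b) = decodeWord n a + decodeWord n b := by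
  funext j
  simp [decodeWord, bit_xor]

lemma decodeWord_succ (n w : ℕ) (j : Fin n) :
    decodeWord (n + 1) w j.succ = decodeWord n (w / 4) j := by
  simp only [decodeWord, Fin.val_succ, mul_add, add_right_comm _ 2 1, bit_add _ _ 2]
  rfl

lemma decodeWord_eq_zero_iff (n w : ℕ) : decodeWord (n + 1) w 0 = 0 ↔ w % 4 = 0 := by
  change (bit w (2 * 0), bit w (2 * 0 + 1)) = 0 ↔ _
  simp only [Prod.ext_iff, Prod.fst_zero, Prod.snd_zero, bit_eq_zero_iff]
  omega

def xorCombination : List ℕ → ℕ → ℕ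
  | [], _ => 0
  | g :: gs, m => (if m % 2 = 1 then g else 0) ^^^ xorCombination gs (m / 2)

lemma decodeWord_xorCombination (n : ℕ) (l : List ℕ) (m : ℕ) :
    decodeWord n (xorCombination l m) = ∑ i : Fin l.length, bit m i • decodeWord n l[i] := by
  induction l generalizing m with
  | nil => simp [xorCombination]
  | cons g gs ih =>
    rw [xorCombination, decodeWord_xor, ih]
    simp only [List.length_cons, Fin.sum_univ_succ, Fin.val_zero, Fin.val_succ, bit_add _ _ 1]
    congr 1
    rcases Nat.mod_two_eq_zero_or_one m with h | h <;> simp [h, bit]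

def quaternaryWeight : ℕ → ℕ → ℕ
  | 0, _ => 0
  | k + 1, x => (if x % 4 = 0 then 0 else 1) + quaternaryWeight k (x / 4)

lemma hammingNorm_decodeWord (n w : ℕ) : hammingNorm (decodeWord n w) = quaternaryWeight n w := by
  induction n generalizing w with
  | zero => simp [hammingNorm, quaternaryWeight]
  | succ n ih =>
    rw [quaternaryWeight, ← ih, hammingNorm, hammingNorm, card_filter, card_filter,
      Fin.sum_univ_succ]
    simp only [decodeWord_succ, ne_eq, decodeWord_eq_zero_iff]
    split_ifs <;> rfl

def bitsEquiv (n : ℕ) : Fin (2 ^ n) ≃ (Fin n → ZMod 2) := finFunctionFinEquiv.symm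

lemma bitsEquiv_apply (n : ℕ) (m : Fin (2 ^ n)) (i : Fin n) : bitsEquiv n m i = bit m i := by
  rw [bit, ← finFunctionFinEquiv_symm_apply_val]
  exact (Fin.cast_val_eq_self _).symm

end Words

section Dodecacode

/-- Digit `a + 2 * b` stands for `a + b ω`, so `0, 1, 2, 3` stand for `0, 1, ω, ω̄`; the rows are
the generators of `dodecacode`. -/
def dodecaDigits : List (List ℕ) :=
  [[0,0,0,0,0,0,1,1,1,1,1,1], [0,0,0,0,0,0,2,2,2,2,2,2], [1,1,1,1,1,1,0,0,0,0,0,0],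
   [2,2,2,2,2,2,0,0,0,0,0,0], [0,0,0,1,2,3,0,0,0,1,2,3], [0,0,0,2,3,1,0,0,0,2,3,1],
   [1,3,2,0,0,0,1,3,2,0,0,0], [2,1,3,0,0,0,2,1,3,0,0,0], [0,0,0,1,3,2,2,3,1,0,0,0],
   [0,0,0,2,1,3,1,2,3,0,0,0], [1,2,3,0,0,0,0,0,0,3,2,1], [3,1,2,0,0,0,0,0,0,1,3,2]]

def dodecaWords : List ℕ := dodecaDigits.map (Nat.ofDigits 4)

def dodecaGenerator : Fin dodecaWords.length → Fin 12 → ZMod 2 × ZMod 2 :=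
  decodeWord 12 ∘ dodecaWords.get

def dodecaEncoder : (Fin dodecaWords.length → ZMod 2) →ₗ[ZMod 2] (Fin 12 → ZMod 2 × ZMod 2) :=
  Fintype.linearCombination (ZMod 2) dodecaGenerator

lemma dodecacode_eq_map {ω : F4} (hω : ω ^ 2 = ω + 1) :
    dodecacode ω = (LinearMap.range dodecaEncoder).map (piCoordEquiv hω 12).toLinearMap := by
  rw [dodecaEncoder, Fintype.range_linearCombination, Submodule.map_span, dodecaGenerator,
    Set.range_comp, Set.range_list_get, Set.image_image, dodecacode]
  congr 1
  simp only [dodecaWords, dodecaDigits, List.map_cons, List.map_nil, List.mem_cons,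
    List.not_mem_nil, or_false, Set.ofPred_or, Set.ofPred_eq_eq_singleton, Set.image_insert_eq,
    Set.image_singleton, Set.singleton_union]
  congr 12 <;> funext j <;> fin_cases j <;>
    simp [piCoordEquiv_apply, decodeWord, bit, Nat.ofDigits, ofCoords_apply, hω, add_comm]

lemma dodecaEncoder_bitsEquiv (m : Fin (2 ^ dodecaWords.length)) :
    dodecaEncoder (bitsEquiv _ m) = decodeWord 12 (xorCombination dodecaWords m) := by
  simp [dodecaEncoder, dodecaGenerator, Fintype.linearCombination_apply, decodeWord_xorCombination,
    bitsEquiv_apply]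

def dodecaWeight (m : ℕ) : ℕ := quaternaryWeight 12 (xorCombination dodecaWords m)

lemma hammingNorm_dodecaEncoder_bitsEquiv (m : Fin (2 ^ dodecaWords.length)) :
    hammingNorm (dodecaEncoder (bitsEquiv _ m)) = dodecaWeight m := by
  rw [dodecaEncoder_bitsEquiv, hammingNorm_decodeWord, dodecaWeight]

lemma dodecaWeight_mem {m : Fin (2 ^ dodecaWords.length)} (hm : m ≠ 0) :
    dodecaWeight m ∈ ({6, 8, 10, 12} : Finset ℕ) := by
  have none_outside : #{m : Fin (2 ^ dodecaWords.length) |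
      m ≠ 0 ∧ dodecaWeight m ∉ ({6, 8, 10, 12} : Finset ℕ)} = 0 := by
    decide +kernel
  by_contra h
  exact filter_eq_empty_iff.1 (card_eq_zero.1 none_outside) (mem_univ m) ⟨hm, h⟩

lemma card_dodecaWeight :
    #{m : Fin (2 ^ dodecaWords.length) | dodecaWeight m = 6} = 396 ∧
    #{m : Fin (2 ^ dodecaWords.length) | dodecaWeight m = 8} = 1485 ∧
    #{m : Fin (2 ^ dodecaWords.length) | dodecaWeight m = 10} = 1980 ∧
    #{m : Fin (2 ^ dodecaWords.length) | dodecaWeight m = 12} = 234 := by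
  decide +kernel

lemma dodecaGenerator_isotropic (i k : Fin dodecaWords.length) :
    symplecticForm 12 (dodecaGenerator i) (dodecaGenerator k) = 0 := by
  revert i k
  decide +kernel

lemma bitsEquiv_eq_zero_iff {n : ℕ} {m : Fin (2 ^ n)} : bitsEquiv n m = 0 ↔ m = 0 := by
  rw [← (bitsEquiv n).apply_eq_iff_eq, show bitsEquiv n 0 = 0 from funext fun i => by
    simp [bitsEquiv_apply, bit]]

lemma dodecaEncoder_injective : Function.Injective dodecaEncoder := by
  refine (injective_iff_map_eq_zero _).2 fun v hv => ?_
  obtain ⟨m, rfl⟩ := (bitsEquiv _).surjective v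
  by_contra hm
  have := dodecaWeight_mem (bitsEquiv_eq_zero_iff.not.1 hm)
  rw [← hammingNorm_dodecaEncoder_bitsEquiv, hv, hammingNorm_zero] at this
  simp at this

lemma orthogonal_range_dodecaEncoder :
    (symplecticForm 12).orthogonal (LinearMap.range dodecaEncoder) =
      LinearMap.range dodecaEncoder := by
  refine LinearMap.BilinForm.orthogonal_eq_self symplecticForm_nondegenerate ?_ ?_
  · rintro _ ⟨v, rfl⟩ _ ⟨w, rfl⟩
    simp only [dodecaEncoder, Fintype.linearCombination_apply, map_sum, map_smul,
      LinearMap.sum_apply, LinearMap.smul_apply, dodecaGenerator_isotropic, smul_zero,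
      sum_const_zero]
  · rw [LinearMap.finrank_range_of_inj dodecaEncoder_injective, Module.finrank_fin_fun]
    simp [Module.finrank_pi_fintype, Module.finrank_prod, dodecaWords, dodecaDigits]

end Dodecacode

section Transport

variable {ω : F4} (hω : ω ^ 2 = ω + 1)
include hω

noncomputable def dodecaCodeword (m : Fin (2 ^ dodecaWords.length)) : Fin 12 → F4 :=
  piCoordEquiv hω 12 (dodecaEncoder (bitsEquiv _ m))

lemma dodecaCodeword_injective : Function.Injective (dodecaCodeword hω) :=
  (piCoordEquiv hω 12).injective.comp (dodecaEncoder_injective.comp (bitsEquiv _).injective)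

lemma range_dodecaCodeword : Set.range (dodecaCodeword hω) = dodecacode ω := by
  rw [dodecacode_eq_map hω, Submodule.map_coe, LinearMap.coe_range, ← Set.range_comp,
    ← (bitsEquiv _).surjective.range_comp]
  rfl

lemma wt_dodecaCodeword (m : Fin (2 ^ dodecaWords.length)) :
    wt (dodecaCodeword hω m) = dodecaWeight m := by
  rw [dodecaCodeword, wt_piCoordEquiv, hammingNorm_dodecaEncoder_bitsEquiv]

lemma card_dodecacode : Nat.card (dodecacode ω) = 2 ^ 12 := by
  have := Nat.card_range_of_injective (dodecaCodeword_injective hω)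
  rw [range_dodecaCodeword hω] at this
  exact this.trans (by simp [dodecaWords, dodecaDigits])

lemma dodecacode_eq_traceDual :
    (dodecacode ω : Set (Fin 12 → F4)) = traceDual (dodecacode ω) := by
  rw [dodecacode_eq_map hω, Submodule.map_coe, LinearEquiv.coe_coe, traceDual_image_piCoordEquiv,
    orthogonal_range_dodecaEncoder]

lemma wt_mem_of_mem_dodecacode {c : Fin 12 → F4} (hc : c ∈ dodecacode ω) (h0 : c ≠ 0) :
    wt c ∈ ({6, 8, 10, 12} : Finset ℕ) := by
  rw [← SetLike.mem_coe, ← range_dodecaCodeword hω] at hc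
  obtain ⟨m, rfl⟩ := hc
  rw [wt_dodecaCodeword]
  refine dodecaWeight_mem fun hm => h0 ?_
  rw [hm, dodecaCodeword, bitsEquiv_eq_zero_iff.2 rfl, map_zero, map_zero]

lemma ncard_dodecacode_wt_eq (w : ℕ) :
    {c | c ∈ dodecacode ω ∧ wt c = w}.ncard =
      #{m : Fin (2 ^ dodecaWords.length) | dodecaWeight m = w} := by
  have : {c | c ∈ dodecacode ω ∧ wt c = w} = dodecaCodeword hω '' {m | dodecaWeight m = w} := by
    simp_rw [← SetLike.mem_coe, ← range_dodecaCodeword hω]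
    ext c
    constructor
    · rintro ⟨⟨m, rfl⟩, hw⟩
      exact ⟨m, (wt_dodecaCodeword hω m).symm.trans hw, rfl⟩
    · rintro ⟨m, hm, rfl⟩
      exact ⟨⟨m, rfl⟩, (wt_dodecaCodeword hω m).trans hm⟩
  rw [this, Set.ncard_image_of_injective _ (dodecaCodeword_injective hω),
    Set.ncard_eq_toFinset_card', Set.toFinset_ofPred]

end Transport

/-- The dodecacode has `2¹²` codewords, is self-dual for the trace inner product, has
only even-weight codewords, and its weight distribution is `A₆ = 396`, `A₈ = 1485`,
`A₁₀ = 1980`, `A₁₂ = 234` with no nonzero codewords of other weights; in particular its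
minimum weight is 6. -/
theorem dodecacode_weight_distribution (ω : F4) (hω : ω ^ 2 = ω + 1) :
    Nat.card (dodecacode ω) = 2 ^ 12 ∧
    (dodecacode ω : Set (Fin 12 → F4)) = traceDual (dodecacode ω : Set (Fin 12 → F4)) ∧
    (∀ c ∈ dodecacode ω, Even (wt c)) ∧
    {c : Fin 12 → F4 | c ∈ dodecacode ω ∧ wt c = 6}.ncard = 396 ∧
    {c : Fin 12 → F4 | c ∈ dodecacode ω ∧ wt c = 8}.ncard = 1485 ∧
    {c : Fin 12 → F4 | c ∈ dodecacode ω ∧ wt c = 10}.ncard = 1980 ∧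
    {c : Fin 12 → F4 | c ∈ dodecacode ω ∧ wt c = 12}.ncard = 234 ∧
    (∀ c ∈ dodecacode ω, c ≠ 0 → wt c = 6 ∨ wt c = 8 ∨ wt c = 10 ∨ wt c = 12) ∧
    (∀ c ∈ dodecacode ω, c ≠ 0 → 6 ≤ wt c) := by
  have weights (c) (hc : c ∈ dodecacode ω) (h0 : c ≠ 0) :
      wt c = 6 ∨ wt c = 8 ∨ wt c = 10 ∨ wt c = 12 := by
    simpa using wt_mem_of_mem_dodecacode hω hc h0
  obtain ⟨h6, h8, h10, h12⟩ := card_dodecaWeight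
  refine ⟨card_dodecacode hω, dodecacode_eq_traceDual hω, fun c hc => ?_,
    (ncard_dodecacode_wt_eq hω 6).trans h6, (ncard_dodecacode_wt_eq hω 8).trans h8,
    (ncard_dodecacode_wt_eq hω 10).trans h10, (ncard_dodecacode_wt_eq hω 12).trans h12,
    weights, fun c hc h0 => ?_⟩
  · by_cases h0 : c = 0
    · simp [h0, wt]
    · rcases weights c hc h0 with h | h | h | h <;> rw [h] <;> decide
  · rcases weights c hc h0 with h | h | h | h <;> omega
end
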